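/- arXiv:2106.12279 — 4 statements merged into one kernel-verified Lean document; each statement's English description precedes it below -/
import Mathlib

section
/- Define the sequence d₁ = d and d_{k+1} = d − 1/d_k for a real parameter d with 1 < d ≤ 2, assuming all d_k > 0. If for some n ≥ 1 the condition 1/d_n = d/2 holds, then d = 2·cos(π/(2n+2)). -/
/-- For the recursion `d₁ = d`, `d_{k+1} = d − 1/d_k` with `1 < d ≤ 2` and all
`d_k > 0`: if `1/d_n = d/2` for some `n ≥ 1`, then `d = 2 cos (π/(2n+2))`. -/
theorem recursion_chebyshev_first (d : ℝ) (hd1 : 1 < d) (hd2 : d ≤ 2)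
    (seq : ℕ → ℝ) (hinit : seq 1 = d)
    (hrec : ∀ k, 1 ≤ k → seq (k + 1) = d - 1 / seq k)
    (hpos : ∀ k, 1 ≤ k → 0 < seq k)
    (n : ℕ) (hn : 1 ≤ n) (hend : 1 / seq n = d / 2) :
    d = 2 * Real.cos (Real.pi / (2 * n + 2)) := by
  by_cases hd2' : d = 2
  · exfalso
    subst hd2'
    have claim : ∀ k, 1 ≤ k → seq k * k = k + 1 := by
      intro k hk
      induction k, hk using Nat.le_induction with
      | base => push_cast; rw [hinit]; norm_num
      | succ k hk ih =>
        have hk0 : (0:ℝ) < seq k := hpos k hk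
        have hkk : (0:ℝ) < (k:ℝ) := by exact_mod_cast hk
        rw [hrec k hk]
        push_cast
        field_simp
        nlinarith [ih]
    have hsn : (0:ℝ) < seq n := hpos n hn
    have h1 : seq n = 1 := by
      field_simp at hend
      linarith
    have := claim n hn
    rw [h1] at this
    simp at this
  · have hdlt : d < 2 := lt_of_le_of_ne hd2 hd2'
    set α := Real.arccos (d/2) with hα
    have hcos : Real.cos α = d/2 := Real.cos_arccos (by linarith) (by linarith)
    have hα_pos : 0 < α := Real.arccos_pos.mpr (by linarith)
    have hα_le : α ≤ Real.pi / 2 := Real.arccos_le_pi_div_two.mpr (by linarith)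
    have hpi := Real.pi_pos
    have hα_lt_pi : α < Real.pi := by linarith
    have hsinα : 0 < Real.sin α := Real.sin_pos_of_pos_of_lt_pi hα_pos hα_lt_pi
    have key : ∀ k : ℕ, 1 ≤ k → (0 < Real.sin ((k:ℝ) * α) ∧ (k:ℝ) * α < Real.pi) ∧
        seq k * Real.sin ((k:ℝ) * α) = Real.sin (((k:ℝ) + 1) * α) := by
      intro k hk
      induction k, hk using Nat.le_induction with
      | base =>
        refine ⟨⟨by simpa using hsinα, by simpa using hα_lt_pi⟩, ?_⟩
        simp only [Nat.cast_one, one_mul]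
        rw [hinit, show ((1:ℝ) + 1) * α = α + α by ring, Real.sin_add]
        nlinarith [hcos]
      | succ k hk ih =>
        obtain ⟨⟨hsk, hkpi⟩, heq⟩ := ih
        have hskpos : 0 < seq k := hpos k hk
        have hs1 : 0 < Real.sin (((k:ℝ) + 1) * α) := by
          rw [← heq]; positivity
        have hlt1 : ((k:ℝ) + 1) * α < Real.pi := by
          by_contra h
          push_neg at h
          have h2 : ((k:ℝ) + 1) * α - Real.pi ≤ Real.pi := by nlinarith
          have h3 : 0 ≤ Real.sin (((k:ℝ) + 1) * α - Real.pi) :=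
            Real.sin_nonneg_of_nonneg_of_le_pi (by linarith) h2
          rw [Real.sin_sub_pi] at h3
          linarith
        refine ⟨⟨by push_cast; exact hs1, by push_cast; exact hlt1⟩, ?_⟩
        push_cast
        rw [hrec k hk]
        have hdiv : Real.sin (((k:ℝ) + 1) * α) / seq k = Real.sin ((k:ℝ) * α) := by
          rw [← heq]; field_simp
        have expand1 : Real.sin (((k:ℝ) + 1 + 1) * α) =
            Real.sin (((k:ℝ) + 1) * α) * Real.cos α + Real.cos (((k:ℝ) + 1) * α) * Real.sin α := by
          rw [show ((k:ℝ) + 1 + 1) * α = ((k:ℝ) + 1) * α + α by ring, Real.sin_add]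
        have expand2 : Real.sin ((k:ℝ) * α) =
            Real.sin (((k:ℝ) + 1) * α) * Real.cos α - Real.cos (((k:ℝ) + 1) * α) * Real.sin α := by
          rw [show (k:ℝ) * α = ((k:ℝ) + 1) * α - α by ring, Real.sin_sub]
        have : (d - 1 / seq k) * Real.sin (((k:ℝ) + 1) * α)
            = d * Real.sin (((k:ℝ) + 1) * α) - Real.sin (((k:ℝ) + 1) * α) / seq k := by
          ring
        rw [this, hdiv, expand1, expand2]
        have hd : d = 2 * Real.cos α := by rw [hcos]; ring
        rw [hd]; ring
    obtain ⟨⟨hsn', hnpi⟩, heqn⟩ := key n hn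
    obtain ⟨⟨hsn1, hn1pi⟩, _⟩ := key (n+1) (by omega)
    have hsnpos : 0 < seq n := hpos n hn
    -- end condition : seq n * cos α = 1
    have hend' : seq n * Real.cos α = 1 := by
      rw [hcos]
      field_simp at hend ⊢
      linarith
    -- cos ((n+1) α) = 0
    have hcos0 : Real.cos (((n:ℝ) + 1) * α) = 0 := by
      have h1 : Real.cos α * Real.sin (((n:ℝ) + 1) * α) = Real.sin ((n:ℝ) * α) := by
        rw [← heqn]
        linear_combination Real.sin ((n:ℝ) * α) * hend'
      have expand2 : Real.sin ((n:ℝ) * α) =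
          Real.sin (((n:ℝ) + 1) * α) * Real.cos α - Real.cos (((n:ℝ) + 1) * α) * Real.sin α := by
        rw [show (n:ℝ) * α = ((n:ℝ) + 1) * α - α by ring, Real.sin_sub]
      rw [expand2] at h1
      have : Real.cos (((n:ℝ) + 1) * α) * Real.sin α = 0 := by linarith
      rcases mul_eq_zero.mp this with h | h
      · exact h
      · linarith
    have hn1pos : 0 < ((n:ℝ) + 1) * α := by
      have : (0:ℝ) < (n:ℝ) + 1 := by positivity
      positivity
    have hn1pi' : ((n:ℝ) + 1) * α < Real.pi := by push_cast at hn1pi; linarith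
    rw [Real.cos_eq_zero_iff] at hcos0
    obtain ⟨m, hm⟩ := hcos0
    have hm0 : m = 0 := by
      by_contra hm0
      rcases lt_or_gt_of_ne hm0 with h | h
      · have : (m:ℝ) ≤ -1 := by exact_mod_cast Int.le_sub_one_of_lt h
        nlinarith
      · have : (1:ℝ) ≤ (m:ℝ) := by exact_mod_cast h
        nlinarith
    rw [hm0] at hm
    simp at hm
    have hαval : α = Real.pi / (2 * (n:ℝ) + 2) := by
      have hne : (n:ℝ) + 1 ≠ 0 := by positivity
      field_simp at hm ⊢
      linarith
    rw [← hαval, hcos]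
    ring
end

section
/- If d > 0 satisfies w² = 1/d + 1/d² where w² = d² + 1/d² − 2cosθ with θ ∈ [0, π/3], then d³ − d − 1 ≥ 0, and hence d ≥ 1.3247 (the plastic number, the real root of x³ = x + 1). -/
/-- If `d > 0` satisfies `w² = 1/d + 1/d²` where `w² = d² + 1/d² − 2 cos θ` with
`θ ∈ [0, π/3]`, then `d³ − d − 1 ≥ 0`, hence `d ≥ 1.3247`. -/
theorem ptolemy_trapezoid_236 (d θ w : ℝ) (hd : 0 < d)
    (hθ0 : 0 ≤ θ) (hθ1 : θ ≤ Real.pi / 3)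
    (hwdef : w ^ 2 = d ^ 2 + 1 / d ^ 2 - 2 * Real.cos θ)
    (hcond : w ^ 2 = 1 / d + 1 / d ^ 2) :
    d ^ 3 - d - 1 ≥ 0 ∧ d ≥ 1.3247 := by
  have hc : Real.cos (Real.pi / 3) ≤ Real.cos θ :=
    Real.cos_le_cos_of_nonneg_of_le_pi hθ0
      (by linarith [Real.pi_pos]) hθ1
  rw [Real.cos_pi_div_three] at hc
  have heq : d ^ 2 - 2 * Real.cos θ = 1 / d := by
    have := hwdef.symm.trans hcond
    linarith
  have hd3 : d ^ 3 - d - 1 ≥ 0 := by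
    have h1 : d * (d ^ 2 - 2 * Real.cos θ) = 1 := by
      rw [heq]; field_simp
    nlinarith [mul_nonneg hd.le (sub_nonneg.mpr hc)]
  refine ⟨hd3, ?_⟩
  nlinarith [sq_nonneg (d - 1.3247), sq_nonneg d, sq_nonneg (d + 1)]
end

section
/- If d > 0 satisfies w² = 1/d + 1/d² where w² = d² + 1/d² − 2cosθ with θ ∈ [0, π/4], then d³ − √2·d − 1 ≥ 0, and hence d ≥ 1.450405 > √2. -/
open Real

lemma sqrt_two_div_two_le_cos {θ : ℝ} (hθ : |θ| ≤ π / 4) : √2 / 2 ≤ cos θ := by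
  rw [← cos_pi_div_four, ← cos_abs θ]
  exact cos_le_cos_of_nonneg_of_le_pi (abs_nonneg θ) (by linarith [pi_pos]) hθ

/-- Equating the law-of-cosines expression for `w²` with the Ptolemy bound leaves a cubic
in `d`. -/
lemma cube_sub_two_mul_cos_mul_eq_one {d c : ℝ} (hd : d ≠ 0)
    (h : d ^ 2 + 1 / d ^ 2 - 2 * c = 1 / d + 1 / d ^ 2) : d ^ 3 - 2 * c * d = 1 := by
  have h' : d ^ 2 - 2 * c = 1 / d := by linarith
  field_simp at h'
  linear_combination h'

lemma sqrt_two_mul_add_one_le_cube {d c : ℝ} (hd : 0 < d) (hc : √2 / 2 ≤ c)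
    (h : d ^ 3 - 2 * c * d = 1) : √2 * d + 1 ≤ d ^ 3 := by
  nlinarith

lemma sqrt_two_lt_1_450405 : √2 < 1.450405 := by
  rw [sqrt_lt' (by norm_num)]
  norm_num

/-- With `f x = x³ - √2 x - 1` and `r = 1.450405`,
`f r - f d = (r - d) (d² + r d + r² - √2)`, so `f d < f r < 0` whenever `d < r`. -/
lemma le_of_sqrt_two_mul_add_one_le_cube {d : ℝ} (h : √2 * d + 1 ≤ d ^ 3) :
    1.450405 ≤ d := by
  have hs : 1.4142135 < √2 := by
    rw [lt_sqrt (by norm_num)]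
    norm_num
  by_contra! hlt
  have hfactor : 0 < (1.450405 - d) * (d ^ 2 + 1.450405 * d + 1.450405 ^ 2 - √2) :=
    mul_pos (by linarith) (by nlinarith [sq_nonneg (d + 1.450405 / 2), sqrt_two_lt_1_450405])
  nlinarith

/-- If `d > 0` satisfies `w² = 1/d + 1/d²` where `w² = d² + 1/d² − 2 cos θ` with
`θ ∈ [0, π/4]`, then `d³ − √2·d − 1 ≥ 0`, hence `d ≥ 1.450405 > √2`. -/
theorem ptolemy_trapezoid_244 (d θ w : ℝ) (hd : 0 < d)
    (hθ0 : 0 ≤ θ) (hθ1 : θ ≤ Real.pi / 4)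
    (hwdef : w ^ 2 = d ^ 2 + 1 / d ^ 2 - 2 * Real.cos θ)
    (hcond : w ^ 2 = 1 / d + 1 / d ^ 2) :
    d ^ 3 - Real.sqrt 2 * d - 1 ≥ 0 ∧ d ≥ 1.450405 ∧ (1.450405 : ℝ) > Real.sqrt 2 := by
  have hcos : √2 / 2 ≤ cos θ :=
    sqrt_two_div_two_le_cos (abs_le.mpr ⟨by linarith [pi_pos], hθ1⟩)
  have hcubic : d ^ 3 - 2 * cos θ * d = 1 :=
    cube_sub_two_mul_cos_mul_eq_one hd.ne' (hwdef.symm.trans hcond)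
  have hbound : √2 * d + 1 ≤ d ^ 3 := sqrt_two_mul_add_one_le_cube hd hcos hcubic
  exact ⟨by linarith, le_of_sqrt_two_mul_add_one_le_cube hbound, sqrt_two_lt_1_450405⟩
end

section
/- The Lobachevsky function Л(x) = −∫₀ˣ log|2 sin t| dt satisfies the distribution law Л(kx)/k = Σ_{r=0}^{k−1} Л(x + rπ/k) for every positive integer k and all real x. -/
open scoped Real

/-- The Lobachevsky function `Л(x) = −∫₀ˣ log|2 sin t| dt`. -/
noncomputable def lobachevsky (x : ℝ) : ℝ :=
  -∫ t in (0 : ℝ)..x, Real.log |2 * Real.sin t|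

/-!
Taking `log |·|` of `2 sin (k t) = ∏_{r<k} 2 sin (t + rπ/k)`, valid off the countable zero set
of `sin (k t)`, and integrating over `[0, x]` gives `Л(kx) = k ∑_r (Л(x + rπ/k) − Л(rπ/k))`.
The case `k = 2` forces `Л(π) = 0`, so `Л` is odd and `π`-periodic, and then the constants
`Л(rπ/k)` cancel in pairs `r ↔ k − r`.
-/

open Finset MeasureTheory intervalIntegral

theorem Finset.sum_range_natCast_mul_two {R : Type*} [CommRing R] (k : ℕ) :
    (∑ r ∈ range k, (r : R)) * 2 = k * (k - 1) := by
  induction k with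
  | zero => simp
  | succ k ih => rw [sum_range_succ, add_mul, ih]; push_cast; ring

theorem IsPrimitiveRoot.prod_one_sub_pow_mul {R : Type*} [CommRing R] [IsDomain R] {ζ : R}
    {k : ℕ} (hζ : IsPrimitiveRoot ζ k) (hk : 0 < k) (w : R) :
    ∏ r ∈ range k, (1 - ζ ^ r * w) = 1 - w ^ k := by
  simpa [Polynomial.eval_prod] using
    congrArg (Polynomial.eval 1) (X_pow_sub_C_eq_prod hζ hk (rfl : w ^ k = w ^ k)).symm

namespace Complex

theorem two_mul_sin_eq_exp_mul (θ : ℂ) :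
    2 * sin θ = exp ((π / 2 - θ) * I) * (1 - exp (2 * θ * I)) := by
  have hsq : exp (2 * θ * I) = exp (θ * I) ^ 2 := by rw [← exp_nat_mul]; ring_nf
  rw [sub_mul, exp_sub, exp_pi_div_two_mul_I, sin, neg_mul, exp_neg, hsq]
  field_simp

/-- With `ζ = exp (2πi/k)` and `w = exp (2iz)`, the `r`-th factor is
`exp (i (π/2 − z − rπ/k)) (1 − ζ ^ r w)`; the phases add up to `π/2 − kz`. -/
theorem prod_two_mul_sin_add (k : ℕ) (hk : 0 < k) (z : ℂ) :
    ∏ r ∈ range k, 2 * sin (z + r * π / k) = 2 * sin (k * z) := by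
  have hk' : (k : ℂ) ≠ 0 := by exact_mod_cast hk.ne'
  have phase : ∑ r ∈ range k, (π / 2 - (z + r * π / k)) * I = (π / 2 - k * z) * I := by
    rw [← sum_mul]
    simp only [sum_sub_distrib, sum_add_distrib, ← sum_div, ← sum_mul, sum_const, card_range,
      nsmul_eq_mul]
    field_simp
    linear_combination (-π) * sum_range_natCast_mul_two (R := ℂ) k
  have root (r : ℕ) :
      exp (2 * (z + r * π / k) * I) = exp (2 * π * I / k) ^ r * exp (2 * z * I) := by
    rw [← exp_nat_mul, ← exp_add]
    congr 1
    field_simp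
    ring
  simp_rw [two_mul_sin_eq_exp_mul, prod_mul_distrib, ← exp_sum, phase, root,
    (isPrimitiveRoot_exp k hk.ne').prod_one_sub_pow_mul hk, ← exp_nat_mul]
  ring_nf

end Complex

namespace Real

theorem prod_two_mul_sin_add (k : ℕ) (hk : 0 < k) (x : ℝ) :
    ∏ r ∈ range k, 2 * sin (x + r * π / k) = 2 * sin (k * x) := by
  exact_mod_cast Complex.prod_two_mul_sin_add k hk x

theorem log_abs_two_mul_sin_mul_eq_sum (k : ℕ) (hk : 0 < k) {t : ℝ} (ht : sin (k * t) ≠ 0) :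
    log |2 * sin (k * t)| = ∑ r ∈ range k, log |2 * sin (t + r * π / k)| := by
  have hprod : ∏ r ∈ range k, 2 * sin (t + r * π / k) ≠ 0 := by
    rw [prod_two_mul_sin_add k hk]
    exact mul_ne_zero two_ne_zero ht
  rw [← prod_two_mul_sin_add k hk, abs_prod, log_prod]
  exact fun r hr => abs_ne_zero.2 (prod_ne_zero_iff.1 hprod r hr)

theorem ae_sin_natCast_mul_ne_zero (k : ℕ) (hk : 0 < k) : ∀ᵐ t : ℝ, sin (k * t) ≠ 0 := by
  have hk' : (k : ℝ) ≠ 0 := by exact_mod_cast hk.ne'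
  filter_upwards [(Set.countable_range fun n : ℤ => n * π / k).ae_notMem volume] with t ht hsin
  obtain ⟨n, hn⟩ := sin_eq_zero_iff.1 hsin
  exact ht ⟨n, show n * π / k = t by rw [hn]; field_simp⟩

theorem intervalIntegrable_log_abs_two_mul_sin (a b : ℝ) :
    IntervalIntegrable (fun t => log |2 * sin t|) volume a b :=
  (analyticOnNhd_const.mul analyticOnNhd_sin).meromorphicOn.intervalIntegrable_log_norm

end Real

open Real

theorem lobachevsky_sub_lobachevsky (a b : ℝ) :
    lobachevsky b - lobachevsky a = -∫ t in a..b, log |2 * sin t| := by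
  rw [lobachevsky, lobachevsky, ← integral_interval_sub_left
    (intervalIntegrable_log_abs_two_mul_sin 0 b) (intervalIntegrable_log_abs_two_mul_sin 0 a)]
  ring

theorem lobachevsky_natCast_mul (k : ℕ) (hk : 0 < k) (x : ℝ) :
    lobachevsky (k * x) =
      k * ∑ r ∈ range k, (lobachevsky (x + r * π / k) - lobachevsky (r * π / k)) := by
  have hk' : (k : ℝ) ≠ 0 := by exact_mod_cast hk.ne'
  calc lobachevsky (k * x)
      = k * -∫ t in 0..x, log |2 * sin (k * t)| := by
        rw [integral_comp_mul_left (fun t => log |2 * sin t|) hk', mul_zero, smul_eq_mul,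
          lobachevsky]
        field_simp
    _ = k * -∫ t in 0..x, ∑ r ∈ range k, log |2 * sin (t + r * π / k)| := by
        congr 2
        refine integral_congr_ae ?_
        filter_upwards [ae_sin_natCast_mul_ne_zero k hk] with t ht _
        exact log_abs_two_mul_sin_mul_eq_sum k hk ht
    _ = k * ∑ r ∈ range k, -∫ t in 0..x, log |2 * sin (t + r * π / k)| := by
        rw [intervalIntegral.integral_finsetSum fun r _ => ?_, sum_neg_distrib]
        simpa using
          (intervalIntegrable_log_abs_two_mul_sin (r * π / k) (x + r * π / k)).comp_add_right
            (r * π / k)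
    _ = _ := by
        simp_rw [integral_comp_add_right (fun t => log |2 * sin t|), zero_add,
          lobachevsky_sub_lobachevsky]

theorem lobachevsky_zero : lobachevsky 0 = 0 := by
  simp [lobachevsky]

theorem lobachevsky_pi : lobachevsky π = 0 := by
  have h := lobachevsky_natCast_mul 2 two_pos (π / 2)
  norm_num [sum_range_succ, lobachevsky_zero, mul_div_cancel₀] at h
  linarith

theorem lobachevsky_odd : Function.Odd lobachevsky := by
  intro x
  have h := integral_comp_neg (a := 0) (b := x) fun t => log |2 * sin t|
  simp only [sin_neg, mul_neg, abs_neg, neg_zero] at h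
  rw [lobachevsky, lobachevsky, integral_symm (-x) 0, ← h]

theorem lobachevsky_periodic : Function.Periodic lobachevsky π := by
  intro x
  have hshift : Function.Periodic (fun t => log |2 * sin t|) π := by
    intro t
    simp [sin_add_pi]
  have h := lobachevsky_sub_lobachevsky x (x + π)
  rw [hshift.intervalIntegral_add_eq x 0, zero_add, ← lobachevsky_sub_lobachevsky,
    lobachevsky_pi, lobachevsky_zero] at h
  linarith

theorem Function.Odd.sum_range_mul_div_eq_zero {f : ℝ → ℝ} {c : ℝ} (hodd : Function.Odd f)
    (hper : Function.Periodic f c) (k : ℕ) : ∑ r ∈ range k, f (r * c / k) = 0 := by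
  rcases Nat.eq_zero_or_pos k with rfl | hk
  · simp
  have hk' : (k : ℝ) ≠ 0 := by exact_mod_cast hk.ne'
  have hf0 : f 0 = 0 := by linarith [neg_zero (G := ℝ) ▸ hodd 0]
  set g : ℕ → ℝ := fun r => f (r * c / k)
  have hreflect (r : ℕ) (hr : r ∈ range (k + 1)) : g (k + 1 - 1 - r) = -g r := by
    have hrk : r ≤ k := Nat.lt_succ_iff.1 (mem_range.1 hr)
    have harg : ((k + 1 - 1 - r : ℕ) : ℝ) * c / k = -(r * c / k) + c := by
      rw [Nat.add_sub_cancel, Nat.cast_sub hrk]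
      field_simp
      ring
    simp only [g, harg]
    rw [hper, hodd]
  have hgk : g k = 0 := by
    simp only [g]
    rw [mul_div_cancel_left₀ c hk', ← zero_add c, hper, hf0]
  have hsum := sum_range_reflect g (k + 1)
  rw [sum_congr rfl hreflect, sum_neg_distrib, sum_range_succ, hgk] at hsum
  linarith

/-- The distribution law `Л(kx)/k = ∑_{r=0}^{k−1} Л(x + rπ/k)` for all positive
integers `k` and real `x`. -/
theorem lobachevsky_distribution (k : ℕ) (hk : 0 < k) (x : ℝ) :
    lobachevsky (k * x) / k =
      ∑ r ∈ Finset.range k, lobachevsky (x + r * Real.pi / k) := by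
  have hk' : (k : ℝ) ≠ 0 := by exact_mod_cast hk.ne'
  rw [lobachevsky_natCast_mul k hk, mul_div_cancel_left₀ _ hk', sum_sub_distrib,
    lobachevsky_odd.sum_range_mul_div_eq_zero lobachevsky_periodic, sub_zero]
end
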